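/- arXiv:1407.4174 — 2 statements merged into one kernel-verified Lean document; each statement's English description precedes it below -/
import Mathlib

section
/- Let (X, 𝓑, μ) be a finite measure space and let 𝓜 ⊆ 𝓑 be non-empty and closed under countable nested unions (i.e. if M_i ∈ 𝓜 with M_i ⊆ M_{i+1} for all i, then ⋃_{i=1}^∞ M_i ∈ 𝓜). Then there exists M ∈ 𝓜 such that μ(M) = μ(M′) for every M′ ∈ 𝓜 with M ⊆ M′. -/
/-!
This is the Brezis–Browder ordering principle. Writing `S a` for the supremum of `φ` over the
elements of `s` above `a`, pick inductively `aₙ₊₁ ≥ aₙ` in `s` with `S aₙ ≤ φ aₙ₊₁ + 2⁻ⁿ`, and let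
`u ∈ s` bound the chain. Any `b ≥ u` in `s` lies above every `aₙ`, so
`φ b ≤ S aₙ ≤ φ u + 2⁻ⁿ` for all `n`, whence `φ b = φ u`. For the theorem, `φ = μ` is bounded by
`μ univ < ∞` and the union of a nested sequence bounds it.
-/

open MeasureTheory
open scoped ENNReal

section OrderingPrinciple

variable {α : Type*} [Preorder α]

noncomputable def supAbove (s : Set α) (φ : α → ℝ≥0∞) (a : α) : ℝ≥0∞ :=
  ⨆ b ∈ s ∩ Set.Ici a, φ b

variable {s : Set α} {φ : α → ℝ≥0∞}

lemma le_supAbove {a b : α} (hb : b ∈ s) (hab : a ≤ b) : φ b ≤ supAbove s φ a :=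
  le_biSup φ ⟨hb, hab⟩

lemma supAbove_le {C : ℝ≥0∞} (hC : ∀ b ∈ s, φ b ≤ C) (a : α) : supAbove s φ a ≤ C :=
  iSup₂_le fun b hb => hC b hb.1

lemma exists_le_add_of_supAbove_ne_top {a : α} (ha : a ∈ s) (hfin : supAbove s φ a ≠ ∞)
    {ε : ℝ≥0∞} (hε : ε ≠ 0) : ∃ b ∈ s, a ≤ b ∧ supAbove s φ a ≤ φ b + ε := by
  rcases eq_or_ne (supAbove s φ a) 0 with h0 | h0
  · exact ⟨a, ha, le_rfl, by simp [h0]⟩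
  obtain ⟨b, ⟨hb, hab⟩, hlt⟩ := lt_biSup_iff.1 (ENNReal.sub_lt_self hfin h0 hε)
  exact ⟨b, hb, hab, tsub_le_iff_right.1 hlt.le⟩

lemma exists_monotone_seq_supAbove_le_add (hs : s.Nonempty)
    (hfin : ∀ a ∈ s, supAbove s φ a ≠ ∞) {ε : ℕ → ℝ≥0∞} (hε : ∀ n, ε n ≠ 0) :
    ∃ f : ℕ → α, (∀ n, f n ∈ s) ∧ Monotone f ∧
      ∀ n, supAbove s φ (f n) ≤ φ (f (n + 1)) + ε n := by
  choose g hgs hle hg using fun (a : s) n =>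
    exists_le_add_of_supAbove_ne_top a.2 (hfin a a.2) (hε n)
  let f : ℕ → s := fun n => Nat.recOn n ⟨hs.some, hs.some_mem⟩ fun n a => ⟨g a n, hgs a n⟩
  have hf_succ (n : ℕ) : (f (n + 1) : α) = g (f n) n := rfl
  refine ⟨Subtype.val ∘ f, fun n => (f n).2, monotone_nat_of_le_succ fun n => ?_, fun n => ?_⟩
  · simpa only [Function.comp_apply, hf_succ] using hle (f n) n
  · simpa only [Function.comp_apply, hf_succ] using hg (f n) n

theorem MonotoneOn.exists_forall_le_imp_eq (hφ : MonotoneOn φ s) {C : ℝ≥0∞}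
    (hC : ∀ a ∈ s, φ a ≤ C) (hC_ne_top : C ≠ ∞) (hs : s.Nonempty)
    (hseq : ∀ f : ℕ → α, (∀ n, f n ∈ s) → Monotone f → ∃ u ∈ s, ∀ n, f n ≤ u) :
    ∃ a ∈ s, ∀ b ∈ s, a ≤ b → φ a = φ b := by
  obtain ⟨f, hfs, hf, hfφ⟩ := exists_monotone_seq_supAbove_le_add (ε := fun n => 2⁻¹ ^ n) hs
    (fun a _ => ne_top_of_le_ne_top hC_ne_top (supAbove_le hC a)) (fun n => by simp)
  obtain ⟨u, hu, hfu⟩ := hseq f hfs hf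
  refine ⟨u, hu, fun b hb hub => le_antisymm (hφ hu hb hub) ?_⟩
  have hb_le : ∀ n : ℕ, φ b ≤ φ u + 2⁻¹ ^ n := fun n =>
    calc φ b ≤ supAbove s φ (f n) := le_supAbove hb ((hfu n).trans hub)
      _ ≤ φ (f (n + 1)) + 2⁻¹ ^ n := hfφ n
      _ ≤ φ u + 2⁻¹ ^ n := by gcongr; exact hφ (hfs _) hu (hfu _)
  refine ENNReal.le_of_forall_pos_le_add fun ε hε _ => ?_
  obtain ⟨n, hn⟩ := ENNReal.exists_inv_two_pow_lt (ENNReal.coe_ne_zero.2 hε.ne')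
  exact (hb_le n).trans (by gcongr)

end OrderingPrinciple

theorem exists_measure_maximal_of_closed_under_nested_unions_general {X : Type*}
    [MeasurableSpace X] (μ : Measure X) [IsFiniteMeasure μ]
    (𝓜 : Set (Set X)) (hne : 𝓜.Nonempty)
    (hchain : ∀ f : ℕ → Set X, (∀ i, f i ∈ 𝓜) → (∀ i, f i ⊆ f (i + 1)) →
      (⋃ i, f i) ∈ 𝓜) :
    ∃ M ∈ 𝓜, ∀ M' ∈ 𝓜, M ⊆ M' → μ M = μ M' :=
  MonotoneOn.exists_forall_le_imp_eq (fun _ _ _ _ h => measure_mono h)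
    (fun _ _ => measure_mono (Set.subset_univ _)) (measure_ne_top μ _) hne
    fun f hf hmono => ⟨⋃ i, f i, hchain f hf fun i => hmono i.le_succ, Set.subset_iUnion f⟩

/-- If `(X, 𝓑, μ)` is a finite measure space and `𝓜 ⊆ 𝓑` is non-empty and closed under
countable nested unions, then there exists `M ∈ 𝓜` such that `μ(M) = μ(M')` for every
`M' ∈ 𝓜` containing `M`. -/
theorem exists_measure_maximal_of_closed_under_nested_unions {X : Type*}
    [MeasurableSpace X] (μ : Measure X) [IsFiniteMeasure μ]
    (𝓜 : Set (Set X)) (h𝓜 : ∀ S ∈ 𝓜, MeasurableSet S) (hne : 𝓜.Nonempty)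
    (hchain : ∀ f : ℕ → Set X, (∀ i, f i ∈ 𝓜) → (∀ i, f i ⊆ f (i + 1)) →
      (⋃ i, f i) ∈ 𝓜) :
    ∃ M ∈ 𝓜, ∀ M' ∈ 𝓜, M ⊆ M' → μ M = μ M' :=
  exists_measure_maximal_of_closed_under_nested_unions_general μ 𝓜 hne hchain
end

section
/- Let G and G′ be countable groups acting on probability spaces (X, 𝓑, μ) and (X′, 𝓑′, μ′) respectively, and consider the product action of G ⊕ G′ on (X × X′, 𝓑 ⊗ 𝓑′, μ × μ′) given by (g, g′)·(x, x′) = (g·x, g′·x′). Then for A ⊆ G, A′ ⊆ G′ and measurable B ⊆ X, B′ ⊆ X′ with μ(B) > 0 and μ′(B′) > 0, one has c(A, B) · c(A′, B′) = c(A × A′, B × B′). -/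
open Filter MeasureTheory Pointwise ENNReal

/-- The product action `(g, g') • (x, x') = (g • x, g' • x')`. -/
instance prodSMul {G G' X X' : Type*} [SMul G X] [SMul G' X'] :
    SMul (G × G') (X × X') :=
  ⟨fun p q => (p.1 • q.1, p.2 • q.2)⟩

/-- The magnification ratio `c(A, B) = inf { μ(A B') / μ(B') : B' ⊆ B measurable, μ(B') > 0 }`,
where `A B' = ⋃_{a ∈ A} a • B'`. -/
noncomputable def magRatio {G X : Type*} [SMul G X] [MeasurableSpace X]
    (μ : Measure X) (A : Set G) (B : Set X) : ℝ≥0∞ :=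
  sInf {r : ℝ≥0∞ | ∃ B' : Set X, B' ⊆ B ∧ MeasurableSet B' ∧ 0 < μ B' ∧
    r = μ (A • B') / μ B'}

/-!
Testing `c(A × A', B × B')` on rectangles `S × T ⊆ B × B'`, where `(A × A')(S × T) = AS × A'T`,
gives `c(A × A', B × B') ≤ c(A, B) c(A', B')`. Conversely, for `E ⊆ B × B'` and
`F = (A × A')E`, put `f x = μ'(E_x)` and `s y = sup_{a ∈ A} f(a⁻¹ y)`. Fibrewise
`A' E_{a⁻¹ y} ⊆ F_y`, so `c(A', B') s y ≤ μ'(F_y)`; and every superlevel set `{f > t}` lies in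
`B` with `A {f > t} ⊆ {s > t}`, so the layer cake formula gives `c(A, B) ∫ f ≤ ∫ s`. Integrating
over `y` yields `c(A, B) c(A', B') (μ × μ')(E) ≤ (μ × μ')(F)`.
-/

instance prodMulAction {G G' X X' : Type*} [Monoid G] [Monoid G'] [MulAction G X]
    [MulAction G' X'] : MulAction (G × G') (X × X') where
  toSMul := prodSMul
  one_smul q := Prod.ext (one_smul G q.1) (one_smul G' q.2)
  mul_smul p p' q := Prod.ext (mul_smul p.1 p'.1 q.1) (mul_smul p.2 p'.2 q.2)

instance prodMeasurableConstSMul {G G' X X' : Type*} [SMul G X] [SMul G' X']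
    [MeasurableSpace X] [MeasurableSpace X'] [MeasurableConstSMul G X]
    [MeasurableConstSMul G' X'] : MeasurableConstSMul (G × G') (X × X') where
  measurable_const_smul p := (measurable_const_smul p.1).prodMap (measurable_const_smul p.2)

theorem Set.prod_smul_prod {G G' X X' : Type*} [SMul G X] [SMul G' X'] (A : Set G)
    (A' : Set G') (S : Set X) (T : Set X') :
    (A ×ˢ A') • (S ×ˢ T) = (A • S) ×ˢ (A' • T) := by
  ext ⟨x, x'⟩
  simp only [Set.mem_smul, Set.mem_prod, Prod.exists]
  constructor
  · rintro ⟨a, a', ⟨ha, ha'⟩, s, t, ⟨hs, ht⟩, h⟩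
    exact ⟨⟨a, ha, s, hs, congrArg Prod.fst h⟩, ⟨a', ha', t, ht, congrArg Prod.snd h⟩⟩
  · rintro ⟨⟨a, ha, s, hs, rfl⟩, ⟨a', ha', t, ht, rfl⟩⟩
    exact ⟨a, a', ⟨ha, ha'⟩, s, t, ⟨hs, ht⟩, rfl⟩

theorem preimage_prodMk_smul_subset {G G' X X' : Type*} [SMul G X] [SMul G' X']
    (A : Set G) (A' : Set G') {a : G} (ha : a ∈ A) (x : X)
    (E : Set (X × X')) : A' • (Prod.mk x ⁻¹' E) ⊆ Prod.mk (a • x) ⁻¹' ((A ×ˢ A') • E) := by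
  rintro _ ⟨a', ha', z, hz, rfl⟩
  exact (Set.smul_mem_smul (Set.mk_mem_prod ha ha') hz : (a, a') • (x, z) ∈ (A ×ˢ A') • E)

theorem smul_setOf_lt_subset {G X β : Type*} [Group G] [MulAction G X] [CompleteLattice β]
    (A : Set G) (f : X → β) (t : β) :
    A • {x | t < f x} ⊆ {y | t < ⨆ a : A, f ((a : G)⁻¹ • y)} := by
  rintro _ ⟨a, ha, x, hx, rfl⟩
  exact lt_of_lt_of_le hx (le_iSup_of_le (⟨a, ha⟩ : A) (by rw [inv_smul_smul]))

theorem Set.Countable.measurableSet_smul {G X : Type*} [Group G] [MulAction G X]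
    [MeasurableSpace X] [MeasurableConstSMul G X] {A : Set G} (hA : A.Countable) {S : Set X}
    (hS : MeasurableSet S) : MeasurableSet (A • S) := by
  rw [← Set.iUnion_smul_set]
  exact .biUnion hA fun g _ => hS.const_smul g

theorem lintegral_eq_lintegral_measure_ofReal_lt {α : Type*} [MeasurableSpace α]
    (μ : Measure α) {f : α → ℝ≥0∞} (hf : Measurable f) (hf_ne_top : ∀ x, f x ≠ ∞) :
    ∫⁻ x, f x ∂μ = ∫⁻ t in Set.Ioi 0, μ {x | ENNReal.ofReal t < f x} := by
  calc ∫⁻ x, f x ∂μ = ∫⁻ x, ENNReal.ofReal (f x).toReal ∂μ := by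
        simp only [ENNReal.ofReal_toReal (hf_ne_top _)]
    _ = ∫⁻ t in Set.Ioi 0, μ {x | t < (f x).toReal} :=
        lintegral_eq_lintegral_meas_lt μ (.of_forall fun _ => toReal_nonneg)
          hf.ennreal_toReal.aemeasurable
    _ = ∫⁻ t in Set.Ioi 0, μ {x | ENNReal.ofReal t < f x} := by
        refine setLIntegral_congr_fun measurableSet_Ioi fun t ht => ?_
        simp only [ENNReal.ofReal_lt_iff_lt_toReal (le_of_lt ht) (hf_ne_top _)]

theorem mul_lintegral_le_of_forall_mul_measure_lt_le {α β : Type*} [MeasurableSpace α]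
    [MeasurableSpace β] {μ : Measure α} {ν : Measure β} {c : ℝ≥0∞}
    {f : α → ℝ≥0∞} {g : β → ℝ≥0∞} (hf : Measurable f) (hg : Measurable g)
    (hf_ne_top : ∀ x, f x ≠ ∞) (hg_ne_top : ∀ y, g y ≠ ∞)
    (h : ∀ t, 0 < t → c * μ {x | t < f x} ≤ ν {y | t < g y}) :
    c * ∫⁻ x, f x ∂μ ≤ ∫⁻ y, g y ∂ν := by
  rw [lintegral_eq_lintegral_measure_ofReal_lt μ hf hf_ne_top,
    lintegral_eq_lintegral_measure_ofReal_lt ν hg hg_ne_top]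
  exact (lintegral_const_mul_le c _).trans
    (setLIntegral_mono' measurableSet_Ioi fun t ht => h _ (ENNReal.ofReal_pos.2 ht))

section magRatio

variable {G X : Type*} [SMul G X] [MeasurableSpace X] (μ : Measure X) (A : Set G) (B : Set X)

theorem magRatio_eq_iInf :
    magRatio μ A B = ⨅ S : {S : Set X // S ⊆ B ∧ MeasurableSet S ∧ 0 < μ S},
      μ (A • (S : Set X)) / μ S := by
  rw [magRatio, ← sInf_range]
  congr 1
  ext r
  constructor
  · rintro ⟨S, hSB, hS, hS0, rfl⟩
    exact ⟨⟨S, hSB, hS, hS0⟩, rfl⟩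
  · rintro ⟨⟨S, hSB, hS, hS0⟩, rfl⟩
    exact ⟨S, hSB, hS, hS0, rfl⟩

theorem magRatio_le_div {S : Set X} (hSB : S ⊆ B) (hS : MeasurableSet S) (hS0 : 0 < μ S) :
    magRatio μ A B ≤ μ (A • S) / μ S :=
  sInf_le ⟨S, hSB, hS, hS0, rfl⟩

variable [IsFiniteMeasure μ]

theorem magRatio_mul_measure_le {S : Set X} (hSB : S ⊆ B) (hS : MeasurableSet S) :
    magRatio μ A B * μ S ≤ μ (A • S) := by
  rcases eq_zero_or_pos (μ S) with hS0 | hS0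
  · simp [hS0]
  · calc magRatio μ A B * μ S ≤ μ (A • S) / μ S * μ S :=
          mul_le_mul_left (magRatio_le_div μ A B hSB hS hS0) _
      _ = μ (A • S) := ENNReal.div_mul_cancel hS0.ne' (measure_ne_top μ S)

theorem le_magRatio_iff {c : ℝ≥0∞} :
    c ≤ magRatio μ A B ↔ ∀ S ⊆ B, MeasurableSet S → c * μ S ≤ μ (A • S) := by
  refine ⟨fun h S hSB hS => ?_, fun h => le_sInf ?_⟩
  · exact (mul_le_mul_left h _).trans (magRatio_mul_measure_le μ A B hSB hS)
  · rintro r ⟨S, hSB, hS, hS0, rfl⟩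
    exact (ENNReal.le_div_iff_mul_le (.inl hS0.ne') (.inl (measure_ne_top μ S))).2 (h S hSB hS)

end magRatio

section prod

variable {G G' X X' : Type*} [MeasurableSpace X] [MeasurableSpace X']
  (μ : Measure X) (μ' : Measure X') [IsFiniteMeasure μ] [IsFiniteMeasure μ']
  (A : Set G) (A' : Set G') (B : Set X) (B' : Set X')

theorem magRatio_prod_le_mul [SMul G X] [SMul G' X'] (hB : MeasurableSet B)
    (hB' : MeasurableSet B') (hB0 : 0 < μ B) (hB'0 : 0 < μ' B') :
    magRatio (μ.prod μ') (A ×ˢ A') (B ×ˢ B') ≤ magRatio μ A B * magRatio μ' A' B' := by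
  rw [magRatio_eq_iInf μ, magRatio_eq_iInf μ']
  refine ENNReal.le_iInf_mul_iInf ⟨⟨B, subset_rfl, hB, hB0⟩, ?_⟩ ⟨⟨B', subset_rfl, hB', hB'0⟩, ?_⟩
    fun ⟨S, hSB, hS, hS0⟩ ⟨T, hTB, hT, hT0⟩ => ?_
  · exact (ENNReal.div_lt_top (measure_ne_top μ _) hB0.ne').ne
  · exact (ENNReal.div_lt_top (measure_ne_top μ' _) hB'0.ne').ne
  · have hST0 : 0 < μ.prod μ' (S ×ˢ T) := by
      rw [Measure.prod_prod]; exact ENNReal.mul_pos hS0.ne' hT0.ne'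
    calc magRatio (μ.prod μ') (A ×ˢ A') (B ×ˢ B')
        ≤ μ.prod μ' ((A ×ˢ A') • (S ×ˢ T)) / μ.prod μ' (S ×ˢ T) :=
          magRatio_le_div _ _ _ (Set.prod_mono hSB hTB) (hS.prod hT) hST0
      _ = μ (A • S) / μ S * (μ' (A' • T) / μ' T) := by
          rw [Set.prod_smul_prod, Measure.prod_prod, Measure.prod_prod,
            ENNReal.mul_div_mul_comm (.inl hS0.ne') (.inl (measure_ne_top μ S))]

theorem magRatio_mul_measure_fiber_le [SMul G X] [SMul G' X'] {E : Set (X × X')}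
    (hEB : E ⊆ B ×ˢ B') (hE : MeasurableSet E) {a : G} (ha : a ∈ A) (x : X) :
    magRatio μ' A' B' * μ' (Prod.mk x ⁻¹' E) ≤ μ' (Prod.mk (a • x) ⁻¹' ((A ×ˢ A') • E)) :=
  (magRatio_mul_measure_le μ' A' B' (fun _ hz => (hEB hz).2) (measurable_prodMk_left hE)).trans
    (measure_mono (preimage_prodMk_smul_subset A A' ha x E))

end prod

section

variable {G G' X X' : Type*} [Group G] [Group G'] [MulAction G X] [MulAction G' X']
  [MeasurableSpace X] [MeasurableSpace X'] [MeasurableConstSMul G X] [MeasurableConstSMul G' X']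
  (μ : Measure X) (μ' : Measure X') [IsFiniteMeasure μ] [IsFiniteMeasure μ']
  {A : Set G} {A' : Set G'} (B : Set X) (B' : Set X')

theorem magRatio_mul_magRatio_mul_measure_le (hA : A.Countable) (hA' : A'.Countable)
    {E : Set (X × X')} (hEB : E ⊆ B ×ˢ B') (hE : MeasurableSet E) :
    magRatio μ A B * magRatio μ' A' B' * μ.prod μ' E ≤ μ.prod μ' ((A ×ˢ A') • E) := by
  have := hA.to_subtype
  set F := (A ×ˢ A') • E
  set f : X → ℝ≥0∞ := fun x => μ' (Prod.mk x ⁻¹' E)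
  set s : X → ℝ≥0∞ := fun y => ⨆ a : A, f ((a : G)⁻¹ • y)
  have hf : Measurable f := measurable_measure_prodMk_left hE
  have hs : Measurable s := .iSup fun a => hf.comp (measurable_const_smul _)
  have hs_ne_top (y : X) : s y ≠ ∞ :=
    ((iSup_le fun _ => measure_mono (Set.subset_univ _)).trans_lt (measure_lt_top μ' _)).ne
  have hfiber (y : X) : magRatio μ' A' B' * s y ≤ μ' (Prod.mk y ⁻¹' F) := by
    rw [ENNReal.mul_iSup]
    refine iSup_le fun a => ?_
    simpa only [smul_inv_smul] using
      magRatio_mul_measure_fiber_le μ' A A' B B' hEB hE a.2 ((a : G)⁻¹ • y)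
  have hlevel (t : ℝ≥0∞) (ht : 0 < t) : magRatio μ A B * μ {x | t < f x} ≤ μ {y | t < s y} := by
    have hB : {x | t < f x} ⊆ B := fun x hx => by
      obtain ⟨x', hx'⟩ : (Prod.mk x ⁻¹' E).Nonempty :=
        Set.nonempty_iff_ne_empty.2 fun h => by simp [f, h] at hx
      exact (hEB hx').1
    exact (magRatio_mul_measure_le μ A B hB (measurableSet_lt measurable_const hf)).trans
      (measure_mono (smul_setOf_lt_subset A f t))
  calc magRatio μ A B * magRatio μ' A' B' * μ.prod μ' E
      = magRatio μ' A' B' * (magRatio μ A B * ∫⁻ x, f x ∂μ) := by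
        rw [Measure.prod_apply hE]; ring
    _ ≤ magRatio μ' A' B' * ∫⁻ y, s y ∂μ := by
        gcongr
        exact mul_lintegral_le_of_forall_mul_measure_lt_le hf hs (fun _ => measure_ne_top μ' _)
          hs_ne_top hlevel
    _ ≤ ∫⁻ y, magRatio μ' A' B' * s y ∂μ := lintegral_const_mul_le _ s
    _ ≤ ∫⁻ y, μ' (Prod.mk y ⁻¹' F) ∂μ := lintegral_mono hfiber
    _ = μ.prod μ' F := (Measure.prod_apply ((hA.prod hA').measurableSet_smul hE)).symm

end

theorem magRatio_prod_general {G G' X X' : Type*} [Group G] [Group G'] [Countable G] [Countable G']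
    [MulAction G X] [MulAction G' X'] [MeasurableSpace X] [MeasurableSpace X']
    (μ : Measure X) (μ' : Measure X')
    [IsProbabilityMeasure μ] [IsProbabilityMeasure μ']
    (hmeas : ∀ g : G, Measurable (fun x : X => g • x))
    (hmeas' : ∀ g : G', Measurable (fun x : X' => g • x))
    (A : Set G) (A' : Set G') (B : Set X) (B' : Set X')
    (hB : MeasurableSet B) (hB' : MeasurableSet B')
    (hB0 : 0 < μ B) (hB'0 : 0 < μ' B') :
    magRatio μ A B * magRatio μ' A' B' = magRatio (μ.prod μ') (A ×ˢ A') (B ×ˢ B') := by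
  have : MeasurableConstSMul G X := ⟨hmeas⟩
  have : MeasurableConstSMul G' X' := ⟨hmeas'⟩
  refine le_antisymm ((le_magRatio_iff _ _ _).2 fun E hEB hE => ?_)
    (magRatio_prod_le_mul μ μ' A A' B B' hB hB' hB0 hB'0)
  exact magRatio_mul_magRatio_mul_measure_le μ μ' B B' A.to_countable A'.to_countable hEB hE

/-- Multiplicativity of magnification ratios: if countable groups `G, G'` act on
probability spaces `(X, μ)` and `(X', μ')` by measure preserving maps, then for `A ⊆ G`,
`A' ⊆ G'` and non-null measurable `B ⊆ X`, `B' ⊆ X'`, the product action of `G × G'` on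
`(X × X', μ × μ')` satisfies `c(A, B) · c(A', B') = c(A × A', B × B')`. -/
theorem magRatio_prod {G G' X X' : Type*} [Group G] [Group G'] [Countable G] [Countable G']
    [MulAction G X] [MulAction G' X'] [MeasurableSpace X] [MeasurableSpace X']
    (μ : Measure X) (μ' : Measure X')
    [IsProbabilityMeasure μ] [IsProbabilityMeasure μ']
    (hmeas : ∀ g : G, Measurable (fun x : X => g • x))
    (hinv : ∀ (g : G) (S : Set X), MeasurableSet S → μ (g • S) = μ S)
    (hmeas' : ∀ g : G', Measurable (fun x : X' => g • x))
    (hinv' : ∀ (g : G') (S : Set X'), MeasurableSet S → μ' (g • S) = μ' S)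
    (A : Set G) (A' : Set G') (B : Set X) (B' : Set X')
    (hB : MeasurableSet B) (hB' : MeasurableSet B')
    (hB0 : 0 < μ B) (hB'0 : 0 < μ' B') :
    magRatio μ A B * magRatio μ' A' B' = magRatio (μ.prod μ') (A ×ˢ A') (B ×ˢ B') :=
  magRatio_prod_general μ μ' hmeas hmeas' A A' B B' hB hB' hB0 hB'0
end
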